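/- arXiv:2010.03980 — 2 statements merged into one kernel-verified Lean document; each statement's English description precedes it below -/
import Mathlib

section
/- Let G be a graph with n vertices, m edges, and first Zagreb index M1, with n ≤ 8m²/(2m + M1). Then QE(G) ≤ 2m/n + √((n−1)·(2m + M1 − 4m²/n − (2m/n)²)). -/
/-!
The eigenvalues `qᵢ` of `Q = D + A` satisfy `∑ qᵢ = tr Q = 2m` and `∑ qᵢ² = tr Q² = 2m + M₁`,
and the Rayleigh quotient of the all-ones vector gives `max qᵢ ≥ 4m/n`. Put `a = 2m/n`,
`S = ∑ (qᵢ - a)² = 2m + M₁ - 4m²/n` and `t = max qᵢ - a ≥ a`. Cauchy–Schwarz on the other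
`n - 1` deviations gives `QE ≤ t + √((n - 1)(S - t²))`. The hypothesis on `n` says exactly
`S ≤ n a²`, which makes this expression nonincreasing in `t` on `[a, √S]`, so it is at most its
value at `t = a`.
-/

open Finset Matrix BigOperators

/-- The signless Laplacian matrix `Q(G) = D(G) + A(G)` of a simple graph, over `ℝ`. -/
noncomputable def signlessLaplacian {V : Type*} [Fintype V] [DecidableEq V]
    (G : SimpleGraph V) [DecidableRel G.Adj] : Matrix V V ℝ :=
  Matrix.diagonal (fun v => (G.degree v : ℝ)) + G.adjMatrix ℝ

lemma signlessLaplacian_isHermitian {V : Type*} [Fintype V] [DecidableEq V]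
    (G : SimpleGraph V) [DecidableRel G.Adj] : (signlessLaplacian G).IsHermitian := by
  unfold signlessLaplacian
  apply Matrix.IsHermitian.add
  · exact Matrix.isHermitian_diagonal _
  · rw [Matrix.IsHermitian, conjTranspose_eq_transpose_of_trivial]
    exact G.isSymm_adjMatrix

/-- The signless Laplacian eigenvalues of `G` (as a function on the vertex index type). -/
noncomputable def qEig {V : Type*} [Fintype V] [DecidableEq V]
    (G : SimpleGraph V) [DecidableRel G.Adj] : V → ℝ :=
  (signlessLaplacian_isHermitian G).eigenvalues

/-- The number of edges of `G`, as a real number. -/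
noncomputable def mE {V : Type*} [Fintype V] [DecidableEq V]
    (G : SimpleGraph V) [DecidableRel G.Adj] : ℝ :=
  G.edgeFinset.card

/-- The first Zagreb index `M₁(G) = Σ d(v)²`, as a real number. -/
noncomputable def M1 {V : Type*} [Fintype V] [DecidableEq V]
    (G : SimpleGraph V) [DecidableRel G.Adj] : ℝ :=
  ∑ v, (G.degree v : ℝ) ^ 2

/-- The signless Laplacian energy `QE(G) = Σ |qᵢ - 2m/n|`. -/
noncomputable def QE {V : Type*} [Fintype V] [DecidableEq V]
    (G : SimpleGraph V) [DecidableRel G.Adj] : ℝ :=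
  ∑ i, |qEig G i - 2 * mE G / (Fintype.card V : ℝ)|

namespace Matrix.IsHermitian

variable {ι : Type*} [Fintype ι] [DecidableEq ι]

lemma trace_mul_self_eq_sum_eigenvalues_sq {𝕜 : Type*} [RCLike 𝕜] {A : Matrix ι ι 𝕜}
    (hA : A.IsHermitian) : (A * A).trace = ∑ i, (hA.eigenvalues i : 𝕜) ^ 2 := by
  conv_lhs => rw [hA.spectral_theorem, ← map_mul, diagonal_mul_diagonal,
    Unitary.conjStarAlgAut_apply, trace_mul_cycle, Unitary.coe_star_mul_self, one_mul,
    trace_diagonal]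
  simp [sq]

lemma exists_dotProduct_mulVec_le_eigenvalue_mul [Nonempty ι] {A : Matrix ι ι ℝ}
    (hA : A.IsHermitian) (x : ι → ℝ) :
    ∃ i, x ⬝ᵥ (A *ᵥ x) ≤ hA.eigenvalues i * (x ⬝ᵥ x) := by
  set U : Matrix ι ι ℝ := (hA.eigenvectorUnitary : Matrix ι ι ℝ)
  have hU : U * star U = 1 := Unitary.mul_star_self_of_mem hA.eigenvectorUnitary.2
  have hdot : ∀ v w : ι → ℝ, v ⬝ᵥ (U *ᵥ w) = (star U *ᵥ v) ⬝ᵥ w := fun v w => by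
    rw [dotProduct_mulVec, star_eq_conjTranspose, conjTranspose_eq_transpose_of_trivial,
      mulVec_transpose]
  set y := star U *ᵥ x
  have hxx : x ⬝ᵥ x = y ⬝ᵥ y := by
    rw [← hdot, mulVec_mulVec, hU, one_mulVec]
  have hxAx : x ⬝ᵥ (A *ᵥ x) = ∑ i, hA.eigenvalues i * y i ^ 2 := by
    conv_lhs => rw [hA.spectral_theorem, Unitary.conjStarAlgAut_apply, ← mulVec_mulVec,
      ← mulVec_mulVec, hdot]
    simp [dotProduct, mulVec_diagonal, sq, mul_left_comm, y, U]
  obtain ⟨i, hi⟩ := Finite.exists_max hA.eigenvalues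
  refine ⟨i, ?_⟩
  rw [hxAx, hxx, dotProduct, Finset.mul_sum]
  exact Finset.sum_le_sum fun j _ => by nlinarith [hi j, mul_self_nonneg (y j)]

end Matrix.IsHermitian

lemma add_sqrt_mul_sub_sq_le {a t c S : ℝ} (ha : 0 ≤ a) (hc : 0 ≤ c) (hat : a ≤ t)
    (htS : t ^ 2 ≤ S) (hS : S ≤ (c + 1) * a ^ 2) :
    t + √(c * (S - t ^ 2)) ≤ a + √(c * (S - a ^ 2)) := by
  rcases hat.eq_or_lt with rfl | hlt
  · rfl
  have hat2 : a ^ 2 < t ^ 2 := by nlinarith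
  set p := √(c * (S - a ^ 2))
  set q := √(c * (S - t ^ 2))
  have hp : p ^ 2 = c * (S - a ^ 2) := Real.sq_sqrt (by nlinarith)
  have hq : q ^ 2 = c * (S - t ^ 2) := Real.sq_sqrt (by nlinarith)
  have hpa : p ≤ c * a := Real.sqrt_le_iff.mpr ⟨by positivity, by nlinarith⟩
  have hqt : q ≤ c * t := Real.sqrt_le_iff.mpr ⟨mul_nonneg hc (ha.trans hat),
    by nlinarith [mul_nonneg hc (show 0 ≤ (c + 1) * t ^ 2 - S by nlinarith)]⟩
  have hq0 : 0 ≤ q := Real.sqrt_nonneg _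
  have hpq : 0 < p + q := by
    by_contra! h
    have hp0 : p = 0 := le_antisymm (by linarith) (Real.sqrt_nonneg _)
    rw [hp0] at hp
    nlinarith
  have key : (t - a) * (p + q) ≤ (p - q) * (p + q) := by
    nlinarith [mul_le_mul_of_nonneg_left (add_le_add hpa hqt) (sub_nonneg.mpr hat)]
  linarith [le_of_mul_le_mul_right key hpq]

lemma Finset.sum_abs_le_sqrt_card_mul_sum_sq {ι : Type*} (s : Finset ι) (f : ι → ℝ) :
    ∑ i ∈ s, |f i| ≤ √(#s * ∑ i ∈ s, f i ^ 2) := by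
  apply Real.le_sqrt_of_sq_le
  simpa only [sq_abs] using sq_sum_le_card_mul_sum_sq (s := s) (f := fun i => |f i|)

lemma sum_abs_sub_le_of_two_mul_le {ι : Type*} [Fintype ι] [DecidableEq ι] (x : ι → ℝ) {a : ℝ}
    (ha : 0 ≤ a) {j : ι} (hj : 2 * a ≤ x j)
    (hS : ∑ i, (x i - a) ^ 2 ≤ Fintype.card ι * a ^ 2) :
    ∑ i, |x i - a| ≤ a + √((Fintype.card ι - 1) * (∑ i, (x i - a) ^ 2 - a ^ 2)) := by
  set S := ∑ i, (x i - a) ^ 2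
  set c : ℝ := Fintype.card ι - 1
  have hsplit : S = (x j - a) ^ 2 + ∑ i ∈ univ.erase j, (x i - a) ^ 2 :=
    (add_sum_erase _ _ (mem_univ j)).symm
  have hcard : (#(univ.erase j) : ℝ) = c := by
    rw [card_erase_of_mem (mem_univ j), card_univ, Nat.cast_pred (Fintype.card_pos_iff.mpr ⟨j⟩)]
  have hc : 0 ≤ c := hcard ▸ Nat.cast_nonneg _
  have htS : (x j - a) ^ 2 ≤ S :=
    hsplit ▸ le_add_of_nonneg_right (sum_nonneg fun _ _ => sq_nonneg _)
  calc ∑ i, |x i - a| = (x j - a) + ∑ i ∈ univ.erase j, |x i - a| := by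
        rw [← add_sum_erase _ _ (mem_univ j), abs_of_nonneg (by linarith)]
    _ ≤ (x j - a) + √(c * (S - (x j - a) ^ 2)) := by
        rw [← hcard, hsplit, add_sub_cancel_left]
        gcongr
        exact sum_abs_le_sqrt_card_mul_sum_sq _ _
    _ ≤ a + √(c * (S - a ^ 2)) :=
        add_sqrt_mul_sub_sq_le ha hc (by linarith) htS (by rwa [sub_add_cancel])

section SignlessLaplacian

variable {V : Type*} [Fintype V] [DecidableEq V] (G : SimpleGraph V) [DecidableRel G.Adj]

lemma mE_nonneg : 0 ≤ mE G := Nat.cast_nonneg _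

lemma sum_degree_eq_two_mul_mE : ∑ v, (G.degree v : ℝ) = 2 * mE G := by
  rw [← Nat.cast_sum, G.sum_degrees_eq_twice_card_edges, mE]
  push_cast
  rfl

lemma trace_signlessLaplacian : (signlessLaplacian G).trace = 2 * mE G := by
  rw [signlessLaplacian, trace_add, trace_diagonal, SimpleGraph.trace_adjMatrix, add_zero,
    sum_degree_eq_two_mul_mE]

lemma trace_signlessLaplacian_mul_self :
    (signlessLaplacian G * signlessLaplacian G).trace = 2 * mE G + M1 G := by
  have hDA : (diagonal (fun v => (G.degree v : ℝ)) * G.adjMatrix ℝ).trace = 0 := by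
    simp [Matrix.trace, diagonal_mul, -SimpleGraph.mul_adjMatrix_apply]
  have hAD : (G.adjMatrix ℝ * diagonal (fun v => (G.degree v : ℝ))).trace = 0 := by
    simp [Matrix.trace, mul_diagonal, -SimpleGraph.adjMatrix_mul_apply]
  have hAA : (G.adjMatrix ℝ * G.adjMatrix ℝ).trace = 2 * mE G := by
    simp only [Matrix.trace, Matrix.diag, G.adjMatrix_mul_self_apply_self, sum_degree_eq_two_mul_mE]
  rw [signlessLaplacian, add_mul, mul_add, mul_add, trace_add, trace_add, trace_add, hDA, hAD,
    hAA, diagonal_mul_diagonal, trace_diagonal, M1]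
  simp only [sq]
  ring

lemma signlessLaplacian_mulVec_one :
    signlessLaplacian G *ᵥ (fun _ => 1) = fun v => 2 * (G.degree v : ℝ) := by
  ext v
  simp [signlessLaplacian, add_mulVec, mulVec_diagonal, SimpleGraph.adjMatrix_mulVec_apply]
  ring

lemma sum_qEig : ∑ i, qEig G i = 2 * mE G := by
  simpa [qEig, trace_signlessLaplacian] using
    ((signlessLaplacian_isHermitian G).trace_eq_sum_eigenvalues).symm

lemma sum_qEig_sq : ∑ i, qEig G i ^ 2 = 2 * mE G + M1 G := by
  simpa [qEig, trace_signlessLaplacian_mul_self] using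
    ((signlessLaplacian_isHermitian G).trace_mul_self_eq_sum_eigenvalues_sq).symm

lemma exists_four_mul_mE_div_card_le_qEig [Nonempty V] :
    ∃ i, 4 * mE G / Fintype.card V ≤ qEig G i := by
  obtain ⟨i, hi⟩ :=
    (signlessLaplacian_isHermitian G).exists_dotProduct_mulVec_le_eigenvalue_mul (fun _ => 1)
  refine ⟨i, (div_le_iff₀ (by exact_mod_cast Fintype.card_pos)).mpr ?_⟩
  simp only [signlessLaplacian_mulVec_one, dotProduct, one_mul, ← mul_sum,
    sum_degree_eq_two_mul_mE, mul_one, sum_const, card_univ, nsmul_eq_mul] at hi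
  rw [qEig]
  linarith

lemma sum_sq_qEig_sub_avg [Nonempty V] :
    ∑ i, (qEig G i - 2 * mE G / Fintype.card V) ^ 2
      = 2 * mE G + M1 G - 4 * mE G ^ 2 / Fintype.card V := by
  have hn : (Fintype.card V : ℝ) ≠ 0 := by exact_mod_cast Fintype.card_ne_zero
  simp only [sub_sq, sum_add_distrib, sum_sub_distrib, ← sum_mul, ← mul_sum, sum_qEig_sq,
    sum_qEig, sum_const, card_univ, nsmul_eq_mul]
  field_simp
  ring

lemma QE_le_of_card_mul_le [Nonempty V]
    (h : Fintype.card V * (2 * mE G + M1 G) ≤ 8 * mE G ^ 2) :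
    QE G ≤ 2 * mE G / Fintype.card V + √((Fintype.card V - 1) *
      (2 * mE G + M1 G - 4 * mE G ^ 2 / Fintype.card V - (2 * mE G / Fintype.card V) ^ 2)) := by
  have hn : (0 : ℝ) < Fintype.card V := by exact_mod_cast Fintype.card_pos
  obtain ⟨j, hj⟩ := exists_four_mul_mE_div_card_le_qEig G
  have hS : ∑ i, (qEig G i - 2 * mE G / Fintype.card V) ^ 2
      ≤ Fintype.card V * (2 * mE G / Fintype.card V) ^ 2 := by
    rw [sum_sq_qEig_sub_avg]
    field_simp
    linarith
  have key := sum_abs_sub_le_of_two_mul_le (qEig G)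
    (div_nonneg (mul_nonneg zero_le_two (mE_nonneg G)) hn.le) (j := j)
    (by convert hj using 1; ring) hS
  rwa [sum_sq_qEig_sub_avg] at key

end SignlessLaplacian

/-- Upper bound for the signless Laplacian energy when `n ≤ 8m²/(2m + M₁)`:
`QE(G) ≤ 2m/n + √((n-1)(2m + M₁ - 4m²/n - (2m/n)²))`. -/
theorem QE_upper_bound_small_n {n : ℕ} (G : SimpleGraph (Fin n)) [DecidableRel G.Adj]
    (hn : (n : ℝ) ≤ 8 * (mE G) ^ 2 / (2 * mE G + M1 G)) :
    QE G ≤ 2 * mE G / (n : ℝ)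
      + Real.sqrt (((n : ℝ) - 1)
          * (2 * mE G + M1 G - 4 * (mE G) ^ 2 / (n : ℝ) - (2 * mE G / (n : ℝ)) ^ 2)) := by
  rcases n.eq_zero_or_pos with rfl | hn0
  · simp [QE]
  have : Nonempty (Fin n) := ⟨⟨0, hn0⟩⟩
  have hpos : 0 < 2 * mE G + M1 G := by
    rcases div_pos_iff.mp ((Nat.cast_pos.mpr hn0).trans_le hn) with h | h
    · exact h.2
    · nlinarith [h.1]
  have hcard : Fintype.card (Fin n) * (2 * mE G + M1 G) ≤ 8 * mE G ^ 2 := by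
    rw [Fintype.card_fin]
    exact (le_div_iff₀ hpos).mp hn
  simpa using QE_le_of_card_mul_le G hcard
end

section
/- Let G be a regular graph with n vertices and m edges. Then E(G) = QE(G) ≤ 2m/n + √((n−1)·(2m − (2m/n)²)). -/
/-! In an `r`-regular graph the signless Laplacian is `A + r • 1`, a function of the adjacency
matrix, so its spectrum is the adjacency spectrum shifted by `r = 2m/n`; hence `QE = E`. The
all-ones vector makes `r` an adjacency eigenvalue, and the squares of all adjacency eigenvalues
sum to `tr A² = 2m`. Cauchy–Schwarz on the other `n - 1` eigenvalues bounds the sum of their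
absolute values by `√((n - 1)(2m - r²))`. -/

open Finset Matrix BigOperators

lemma adj_isHermitian {V : Type*} [Fintype V] [DecidableEq V]
    (G : SimpleGraph V) [DecidableRel G.Adj] : (G.adjMatrix ℝ).IsHermitian := by
  rw [Matrix.IsHermitian, conjTranspose_eq_transpose_of_trivial]
  exact G.isSymm_adjMatrix

/-- The adjacency eigenvalues of `G`. -/
noncomputable def aEig {V : Type*} [Fintype V] [DecidableEq V]
    (G : SimpleGraph V) [DecidableRel G.Adj] : V → ℝ :=
  (adj_isHermitian G).eigenvalues

/-- The (adjacency) graph energy `E(G) = Σ |λᵢ|`. -/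
noncomputable def AE {V : Type*} [Fintype V] [DecidableEq V]
    (G : SimpleGraph V) [DecidableRel G.Adj] : ℝ :=
  ∑ i, |aEig G i|

namespace Matrix.IsHermitian

variable {n 𝕜 : Type*} [RCLike 𝕜] [Fintype n] [DecidableEq n] {A : Matrix n n 𝕜}

theorem sum_comp_eigenvalues_of_eq_cfc (hA : A.IsHermitian) {B : Matrix n n 𝕜} (hB : B.IsHermitian)
    {f : ℝ → ℝ} (hBA : B = cfc f A) {M : Type*} [AddCommMonoid M] (g : ℝ → M) :
    ∑ i, g (hB.eigenvalues i) = ∑ i, g (f (hA.eigenvalues i)) := by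
  subst hBA
  have hroots := hB.roots_charpoly_eq_eigenvalues
  rw [hA.charpoly_cfc_eq f, Polynomial.roots_prod _ _ (by simp [prod_ne_zero_iff,
    Polynomial.X_sub_C_ne_zero])] at hroots
  simp only [Polynomial.roots_X_sub_C, Multiset.bind_singleton] at hroots
  have hmap : univ.val.map hB.eigenvalues = univ.val.map (f ∘ hA.eigenvalues) := by
    apply Multiset.map_injective (RCLike.ofReal_injective (K := 𝕜))
    simpa only [Multiset.map_map, Function.comp_def] using hroots.symm
  simpa only [Multiset.map_map, Function.comp_def, sum_map_val] using
    congrArg (fun s => (s.map g).sum) hmap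

theorem trace_cfc (hA : A.IsHermitian) (f : ℝ → ℝ) :
    (cfc f A).trace = ∑ i, (f (hA.eigenvalues i) : 𝕜) := by
  have hB : (cfc f A).IsHermitian := (cfc_predicate f A : IsSelfAdjoint _)
  rw [hB.trace_eq_sum_eigenvalues, hA.sum_comp_eigenvalues_of_eq_cfc hB rfl]

end Matrix.IsHermitian

theorem Fintype.sum_abs_le_abs_add_sqrt {ι : Type*} [Fintype ι] (f : ι → ℝ) (i₀ : ι) :
    ∑ i, |f i| ≤ |f i₀| + √((Fintype.card ι - 1) * (∑ i, f i ^ 2 - f i₀ ^ 2)) := by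
  classical
  have : Nonempty ι := ⟨i₀⟩
  have hcard : ((univ.erase i₀).card : ℝ) = Fintype.card ι - 1 := by
    rw [card_erase_of_mem (mem_univ i₀), card_univ, Nat.cast_pred Fintype.card_pos]
  have hsq : ∑ i ∈ univ.erase i₀, |f i| ^ 2 = ∑ i, f i ^ 2 - f i₀ ^ 2 := by
    simp only [sq_abs]
    linarith [add_sum_erase univ (fun i => f i ^ 2) (mem_univ i₀)]
  have hcs : ∑ i ∈ univ.erase i₀, |f i| ≤
      √((Fintype.card ι - 1) * (∑ i, f i ^ 2 - f i₀ ^ 2)) :=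
    (le_abs_self _).trans (Real.abs_le_sqrt (hcard ▸ hsq ▸ sq_sum_le_card_mul_sum_sq))
  rw [← add_sum_erase univ _ (mem_univ i₀)]
  exact add_le_add_right hcs _

namespace SimpleGraph

variable {V : Type*} [Fintype V] {G : SimpleGraph V} [DecidableRel G.Adj] {d : ℕ}

theorem IsRegularOfDegree.two_mul_card_edgeFinset (hG : G.IsRegularOfDegree d) :
    2 * #G.edgeFinset = Fintype.card V * d := by
  simp [← G.sum_degrees_eq_twice_card_edges, hG.degree_eq]

variable [DecidableEq V]

variable (G) in
theorem trace_adjMatrix_sq {α : Type*} [Semiring α] :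
    (G.adjMatrix α ^ 2).trace = 2 * #G.edgeFinset := by
  simp only [sq, trace, diag_apply, adjMatrix_mul_self_apply_self]
  rw [← Nat.cast_sum, G.sum_degrees_eq_twice_card_edges, Nat.cast_mul, Nat.cast_ofNat]

variable (G) in
theorem sum_aEig_sq : ∑ i, aEig G i ^ 2 = 2 * mE G := by
  have h := (adj_isHermitian G).trace_cfc (· ^ 2)
  rw [cfc_pow_id _ 2 (adj_isHermitian G).isSelfAdjoint, trace_adjMatrix_sq] at h
  simpa [aEig, mE, RCLike.ofReal_real_eq_id] using h.symm

theorem IsRegularOfDegree.two_mul_mE_div_card [Nonempty V] (hG : G.IsRegularOfDegree d) :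
    2 * mE G / Fintype.card V = d := by
  rw [mE, div_eq_iff (by positivity)]
  exact_mod_cast hG.two_mul_card_edgeFinset.trans (mul_comm _ _)

theorem IsRegularOfDegree.natCast_mem_spectrum_adjMatrix {K : Type*} [Field K] [Nonempty V]
    (hG : G.IsRegularOfDegree d) : (d : K) ∈ spectrum K (G.adjMatrix K) := by
  rw [← Matrix.spectrum_toLin']
  refine (Module.End.hasEigenvalue_of_hasEigenvector (x := Function.const V 1)
    ⟨Module.End.mem_eigenspace_iff.mpr ?_, ?_⟩).mem_spectrum
  · ext v
    simp [hG.degree_eq]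
  · simp

theorem IsRegularOfDegree.exists_aEig_eq [Nonempty V] (hG : G.IsRegularOfDegree d) :
    ∃ i, aEig G i = d := by
  have h := hG.natCast_mem_spectrum_adjMatrix (K := ℝ)
  rwa [(adj_isHermitian G).spectrum_real_eq_range_eigenvalues] at h

theorem IsRegularOfDegree.signlessLaplacian_eq (hG : G.IsRegularOfDegree d) :
    signlessLaplacian G = cfc (· + (d : ℝ)) (G.adjMatrix ℝ) := by
  have hA : IsSelfAdjoint (G.adjMatrix ℝ) := adj_isHermitian G
  rw [cfc_add_const (d : ℝ) (fun x => x) _ continuousOn_id hA, cfc_id' ℝ _ hA,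
    signlessLaplacian, Algebra.algebraMap_eq_smul_one, smul_one_eq_diagonal, add_comm]
  simp [hG.degree_eq]

theorem IsRegularOfDegree.AE_eq_QE (hG : G.IsRegularOfDegree d) : AE G = QE G := by
  cases isEmpty_or_nonempty V
  · simp [AE, QE]
  · rw [QE, hG.two_mul_mE_div_card, qEig, (adj_isHermitian G).sum_comp_eigenvalues_of_eq_cfc
      (signlessLaplacian_isHermitian G) hG.signlessLaplacian_eq (fun x => |x - d|)]
    simp [AE, aEig]

theorem IsRegularOfDegree.AE_le (hG : G.IsRegularOfDegree d) :
    AE G ≤ 2 * mE G / Fintype.card V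
      + √((Fintype.card V - 1) * (2 * mE G - (2 * mE G / Fintype.card V) ^ 2)) := by
  cases isEmpty_or_nonempty V
  · simp only [AE, univ_eq_empty, sum_empty, Fintype.card_eq_zero, Nat.cast_zero, div_zero]
    positivity
  · obtain ⟨i₀, hi₀⟩ := hG.exists_aEig_eq
    have h := Fintype.sum_abs_le_abs_add_sqrt (aEig G) i₀
    rwa [hi₀, sum_aEig_sq, Nat.abs_cast, ← hG.two_mul_mE_div_card] at h

end SimpleGraph

/-- For a regular graph `G` with `n` vertices and `m` edges,
`E(G) = QE(G) ≤ 2m/n + √((n-1)(2m - (2m/n)²))`. -/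
theorem regular_QE_upper_bound {n : ℕ} (G : SimpleGraph (Fin n)) [DecidableRel G.Adj]
    (r : ℕ) (hreg : G.IsRegularOfDegree r) :
    AE G = QE G
    ∧ QE G ≤ 2 * mE G / (n : ℝ)
        + Real.sqrt (((n : ℝ) - 1) * (2 * mE G - (2 * mE G / (n : ℝ)) ^ 2)) := by
  refine ⟨hreg.AE_eq_QE, ?_⟩
  rw [← hreg.AE_eq_QE]
  simpa only [Fintype.card_fin] using hreg.AE_le
end
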